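/- For a finite canonical ensemble with m ≥ 1 microstates and energies E : Fin m → ℝ, let Z(β) = Σ_i exp(−β E_i) and P_i(β) = exp(−β E_i)/Z(β). Then for every β ∈ ℝ, the second derivative of β ↦ ln Z(β) exists and equals the energy fluctuation (variance): (d²/dβ²) ln Z(β) = Σ_i P_i(β) E_i² − (Σ_i P_i(β) E_i)², and this quantity is nonnegative: σ(β) = ⟨E²⟩(β) − (⟨E⟩(β))² ≥ 0. -/

import Mathlib

/-! Differentiating under the finite sum gives `Z' = -∑ E_i e^{-βE_i}` and
`(∑ E_i e^{-βE_i})' = -∑ E_i² e^{-βE_i}`. Hence `(log Z)' = Z'/Z = -⟨E⟩`, and the quotient rule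
gives `⟨E⟩' = -(⟨E²⟩ - ⟨E⟩²)`. This variance is nonnegative by Jensen's inequality for `x ↦ x²`
with respect to the Gibbs weights. -/

open Real Finset

theorem sq_sum_mul_le_sum_mul_sq {ι : Type*} (s : Finset ι) {w : ι → ℝ} (x : ι → ℝ)
    (hw₀ : ∀ i ∈ s, 0 ≤ w i) (hw₁ : ∑ i ∈ s, w i = 1) :
    (∑ i ∈ s, w i * x i) ^ 2 ≤ ∑ i ∈ s, w i * x i ^ 2 := by
  simpa only [smul_eq_mul] using
    even_two.convexOn_pow.map_sum_le hw₀ hw₁ (fun i _ => Set.mem_univ (x i))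

namespace CanonicalEnsemble

variable {ι : Type*} [Fintype ι] (E : ι → ℝ)

noncomputable def partitionFunction (β : ℝ) : ℝ := ∑ i, exp (-β * E i)

noncomputable def gibbsProb (β : ℝ) (i : ι) : ℝ := exp (-β * E i) / partitionFunction E β

theorem partitionFunction_pos [Nonempty ι] (β : ℝ) : 0 < partitionFunction E β :=
  sum_pos (fun _ _ => exp_pos _) univ_nonempty

theorem gibbsProb_nonneg (β : ℝ) (i : ι) : 0 ≤ gibbsProb E β i :=
  div_nonneg (exp_pos _).le (sum_nonneg fun _ _ => (exp_pos _).le)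

theorem sum_gibbsProb_mul (f : ι → ℝ) (β : ℝ) :
    ∑ i, gibbsProb E β i * f i = (∑ i, f i * exp (-β * E i)) / partitionFunction E β := by
  rw [sum_div]
  exact sum_congr rfl fun i _ => by rw [gibbsProb]; ring

theorem sum_gibbsProb [Nonempty ι] (β : ℝ) : ∑ i, gibbsProb E β i = 1 := by
  have h := sum_gibbsProb_mul E (fun _ => 1) β
  simp only [mul_one, one_mul] at h
  exact h.trans (div_self (partitionFunction_pos E β).ne')

theorem hasDerivAt_sum_mul_exp_neg_mul (f : ι → ℝ) (β : ℝ) :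
    HasDerivAt (fun b => ∑ i, f i * exp (-b * E i)) (-∑ i, f i * E i * exp (-β * E i)) β := by
  rw [← sum_neg_distrib]
  exact HasDerivAt.fun_sum fun i _ =>
    ((((hasDerivAt_neg β).mul_const (E i)).exp).const_mul (f i)).congr_deriv (by ring)

theorem hasDerivAt_partitionFunction (β : ℝ) :
    HasDerivAt (partitionFunction E) (-∑ i, E i * exp (-β * E i)) β := by
  have h := hasDerivAt_sum_mul_exp_neg_mul E (fun _ => 1) β
  simp only [one_mul] at h
  exact h

theorem deriv_log_partitionFunction [Nonempty ι] :
    deriv (fun b => log (partitionFunction E b)) = fun β => -∑ i, gibbsProb E β i * E i := by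
  funext β
  rw [((hasDerivAt_partitionFunction E β).log (partitionFunction_pos E β).ne').deriv,
    sum_gibbsProb_mul, neg_div]

theorem hasDerivAt_meanEnergy [Nonempty ι] (β : ℝ) :
    HasDerivAt (fun b => ∑ i, gibbsProb E b i * E i)
      (-(∑ i, gibbsProb E β i * E i ^ 2 - (∑ i, gibbsProb E β i * E i) ^ 2)) β := by
  have hZ := (partitionFunction_pos E β).ne'
  simp only [sum_gibbsProb_mul]
  refine ((hasDerivAt_sum_mul_exp_neg_mul E E β).fun_div
    (hasDerivAt_partitionFunction E β) hZ).congr_deriv ?_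
  simp only [← sq]
  generalize ∑ i, E i ^ 2 * exp (-β * E i) = A
  generalize ∑ i, E i * exp (-β * E i) = B
  field_simp
  ring

theorem energy_variance_nonneg [Nonempty ι] (β : ℝ) :
    0 ≤ ∑ i, gibbsProb E β i * E i ^ 2 - (∑ i, gibbsProb E β i * E i) ^ 2 :=
  sub_nonneg.2 <| sq_sum_mul_le_sum_mul_sq univ E (fun i _ => gibbsProb_nonneg E β i)
    (sum_gibbsProb E β)

end CanonicalEnsemble

open CanonicalEnsemble in
/-- For a finite canonical ensemble, the second derivative of `β ↦ ln Z(β)` exists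
and equals the energy fluctuation `σ(β) = ⟨E²⟩ − ⟨E⟩²`, which is nonnegative. -/
theorem second_deriv_log_partition_eq_energy_fluctuation
    (m : ℕ) (hm : 1 ≤ m) (E : Fin m → ℝ) (β : ℝ) :
    HasDerivAt (deriv (fun b : ℝ => Real.log (∑ i, Real.exp (-b * E i))))
      ((∑ i, (Real.exp (-β * E i) / ∑ j, Real.exp (-β * E j)) * E i ^ 2)
        - (∑ i, (Real.exp (-β * E i) / ∑ j, Real.exp (-β * E j)) * E i) ^ 2) β ∧
    0 ≤ (∑ i, (Real.exp (-β * E i) / ∑ j, Real.exp (-β * E j)) * E i ^ 2)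
        - (∑ i, (Real.exp (-β * E i) / ∑ j, Real.exp (-β * E j)) * E i) ^ 2 := by
  have : Nonempty (Fin m) := Fin.pos_iff_nonempty.mp hm
  change HasDerivAt (deriv fun b => log (partitionFunction E b))
      (∑ i, gibbsProb E β i * E i ^ 2 - (∑ i, gibbsProb E β i * E i) ^ 2) β ∧
    0 ≤ ∑ i, gibbsProb E β i * E i ^ 2 - (∑ i, gibbsProb E β i * E i) ^ 2
  rw [deriv_log_partitionFunction]
  exact ⟨by simpa only [neg_neg] using (hasDerivAt_meanEnergy E β).fun_neg,
    energy_variance_nonneg E β⟩
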